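/- If C is a nonempty proper subset of a digital Jordan curve J, then C and J \ C have the same number of connected components. -/

import Mathlib

open Set

/-- The minimal open neighborhood of a point in a topological space. -/
def minOpenNhd {X : Type*} (t : TopologicalSpace X) (x : X) : Set X :=
  ⋂₀ {U : Set X | t.IsOpen U ∧ x ∈ U}

/-- The specialization-style preorder: `x ≤ y` iff `U_x ⊆ U_y`. -/
def specLE {X : Type*} (t : TopologicalSpace X) (x y : X) : Prop :=
  minOpenNhd t x ⊆ minOpenNhd t y

/-- Two points are adjacent if distinct and comparable in the specialization order. -/
def Adjacent {X : Type*} (t : TopologicalSpace X) (x y : X) : Prop :=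
  x ≠ y ∧ (specLE t x y ∨ specLE t y x)

/-- The adjacency set of a point. -/
def adjSet {X : Type*} (t : TopologicalSpace X) (x : X) : Set X := {y | Adjacent t x y}

/-- A COTS: a connected space in which every 3-point subset has a point separating
the other two. -/
def IsCOTS {X : Type*} (t : TopologicalSpace X) : Prop :=
  @ConnectedSpace X t ∧
    ∀ Y : Set X, Y.ncard = 3 →
      ∃ y ∈ Y, ∃ a ∈ Y \ {y}, ∃ b ∈ Y \ {y},
        @connectedComponentIn X t {y}ᶜ a ≠ @connectedComponentIn X t {y}ᶜ b

/-- An endpoint of a COTS: a point with at most one neighbor. -/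
def IsEndpoint {X : Type*} (t : TopologicalSpace X) (x : X) : Prop :=
  (adjSet t x).ncard ≤ 1

/-- A COTS-path: the continuous image of a finite COTS. -/
def IsCOTSPath {Y : Type*} (tY : TopologicalSpace Y) (P : Set Y) : Prop :=
  ∃ (C : Type) (tC : TopologicalSpace C), Finite C ∧ IsCOTS tC ∧
    ∃ f : C → Y, @Continuous C Y tC tY f ∧ Set.range f = P

/-- A COTS-path with prescribed start and end points. -/
def IsCOTSPathFromTo {Y : Type*} (tY : TopologicalSpace Y) (P : Set Y) (a b : Y) : Prop :=
  ∃ (C : Type) (tC : TopologicalSpace C), Finite C ∧ IsCOTS tC ∧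
    ∃ f : C → Y, @Continuous C Y tC tY f ∧ Set.range f = P ∧
      ∃ c₀ c₁ : C, IsEndpoint tC c₀ ∧ IsEndpoint tC c₁ ∧ f c₀ = a ∧ f c₁ = b

/-- A COTS-arc: the homeomorphic image of a finite COTS. -/
def IsCOTSArc {Y : Type*} (tY : TopologicalSpace Y) (A : Set Y) : Prop :=
  ∃ (C : Type) (tC : TopologicalSpace C), Finite C ∧ IsCOTS tC ∧
    ∃ f : C → Y, @Topology.IsEmbedding C Y tC tY f ∧ Set.range f = A

/-- A COTS-arc with prescribed endpoints. -/
def IsCOTSArcFromTo {Y : Type*} (tY : TopologicalSpace Y) (A : Set Y) (a b : Y) : Prop :=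
  ∃ (C : Type) (tC : TopologicalSpace C), Finite C ∧ IsCOTS tC ∧
    ∃ f : C → Y, @Topology.IsEmbedding C Y tC tY f ∧ Set.range f = A ∧
      ∃ c₀ c₁ : C, IsEndpoint tC c₀ ∧ IsEndpoint tC c₁ ∧ f c₀ = a ∧ f c₁ = b

/-- The COTS-distance: one less than the minimal cardinality of a COTS-arc
joining two points (`⊤` if there is no such arc). -/
noncomputable def cotsDist {X : Type*} (t : TopologicalSpace X) (x y : X) : ℕ∞ :=
  sInf {n : ℕ∞ | ∃ A : Set X, IsCOTSArcFromTo t A x y ∧ (A.ncard : ℕ∞) = n + 1}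

/-- The Khalimsky topology on ℤ. -/
def khal : TopologicalSpace ℤ :=
  TopologicalSpace.generateFrom
    {s : Set ℤ | ∃ n : ℤ, (Odd n ∧ s = {n}) ∨ (Even n ∧ s = {n - 1, n, n + 1})}

/-- The Khalimsky plane topology on ℤ × ℤ. -/
def khalPlane : TopologicalSpace (ℤ × ℤ) := @instTopologicalSpaceProd ℤ ℤ khal khal

/-- A point of the Khalimsky plane is pure if its coordinates have the same parity. -/
def IsPurePt (p : ℤ × ℤ) : Prop := (Even p.1 ∧ Even p.2) ∨ (Odd p.1 ∧ Odd p.2)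

/-- A digital Jordan curve: a finite set of at least 4 points such that removing
any point leaves a COTS-arc. -/
def IsJordanCurve {X : Type*} (t : TopologicalSpace X) (J : Set X) : Prop :=
  J.Finite ∧ 4 ≤ J.ncard ∧ ∀ j ∈ J, IsCOTSArc t (J \ {j})

/-- The interior of a digital Jordan curve in the Khalimsky plane: the union of the
finite (bounded) connected components of its complement. -/
def jInterior (J : Set (ℤ × ℤ)) : Set (ℤ × ℤ) :=
  ⋃₀ {S | ∃ p ∉ J, S = @connectedComponentIn _ khalPlane Jᶜ p ∧ S.Finite}

/-!
The Khalimsky plane is Alexandrov-discrete, so the connected components of a subset are the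
classes of walks through it along adjacent (specialization-comparable) points. In a finite COTS a
longest chain of adjacent points has no chords (a chord closes a cycle through three points, none
of which separates the other two) and covers everything (otherwise some point has three
neighbours, which violates separation as well), so its adjacency graph is a path. Applied to the
arcs `J \ {j}`, this shows that every point of `J` has exactly two neighbours on `J`, i.e. `J` is
a cycle indexed by `ZMod n`. A proper subset `P` of `ZMod n` has one component for each left end
`i ∈ P`, `i - 1 ∉ P`, and `P` and its complement have equally many left ends: both counts are
`#P` minus the number of `i ∈ P` with `i - 1 ∈ P`.
-/

open Relation Function

section ReachIn

variable {α β : Type*} {r : α → α → Prop} {S : Set α}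

def ReachIn (r : α → α → Prop) (S : Set α) : α → α → Prop :=
  ReflTransGen fun a b => a ∈ S ∧ b ∈ S ∧ r a b

def reachClasses (r : α → α → Prop) (S : Set α) : Set (Set α) :=
  (fun a => {b | ReachIn r S a b}) '' S

lemma ReachIn.symm (hr : ∀ a b, r a b → r b a) {a b : α} (h : ReachIn r S a b) :
    ReachIn r S b a := by
  induction h with
  | refl => exact .refl
  | tail _ hbc ih => exact ih.head ⟨hbc.2.1, hbc.1, hr _ _ hbc.2.2⟩

lemma ReachIn.mem {a b : α} (ha : a ∈ S) (h : ReachIn r S a b) : b ∈ S := by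
  induction h with
  | refl => exact ha
  | tail _ hbc => exact hbc.2.1

lemma ReachIn.setOf_eq (hr : ∀ a b, r a b → r b a) {a b : α} (h : ReachIn r S a b) :
    {c | ReachIn r S a c} = {c | ReachIn r S b c} :=
  Set.ext fun _ => ⟨(h.symm hr).trans, h.trans⟩

lemma ReachIn.exists_step_out {T : Set α} {a b : α} (h : ReachIn r S a b) (ha : a ∈ T)
    (hb : b ∉ T) : ∃ x ∈ T, ∃ z ∉ T, r x z := by
  induction h with
  | refl => exact absurd ha hb
  | @tail c d _ hcd ih =>
    by_cases hc : c ∈ T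
    · exact ⟨c, hc, d, hb, hcd.2.2⟩
    · exact ih hc

lemma setOf_reachIn_image {s : β → β → Prop} {e : β → α} (he : Injective e)
    (hrs : ∀ i k, r (e i) (e k) ↔ s i k) (P : Set β) (i : β) :
    {y | ReachIn r (e '' P) (e i) y} = e '' {k | ReachIn s P i k} := by
  ext y
  constructor
  · intro h
    induction h with
    | refl => exact ⟨i, .refl, rfl⟩
    | tail _ hstep ih =>
      obtain ⟨k, hik, rfl⟩ := ih
      obtain ⟨⟨k₁, hk₁, hk₁e⟩, ⟨k', hk', rfl⟩, hkk'⟩ := hstep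
      obtain rfl := he hk₁e
      exact ⟨k', hik.tail ⟨hk₁, hk', (hrs _ _).1 hkk'⟩, rfl⟩
  · rintro ⟨k, hik, rfl⟩
    exact hik.lift e fun a b h =>
      ⟨mem_image_of_mem e h.1, mem_image_of_mem e h.2.1, (hrs a b).2 h.2.2⟩

lemma ncard_reachClasses_image {s : β → β → Prop} {e : β → α} (he : Injective e)
    (hrs : ∀ i k, r (e i) (e k) ↔ s i k) (P : Set β) :
    (reachClasses r (e '' P)).ncard = (reachClasses s P).ncard := by
  rw [reachClasses, reachClasses, image_image,
    image_congr fun i _ => setOf_reachIn_image he hrs P i, ← image_image (image e),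
    ncard_image_of_injective _ (image_injective.2 he)]

end ReachIn

section Adjacency

variable {X : Type*} [t : TopologicalSpace X]

lemma specLE_iff_specializes {x y : X} : specLE t x y ↔ x ⤳ y := by
  rw [specializes_iff_forall_open]
  refine ⟨fun h s hs hy => h (fun _ hU => hU.2) s ⟨hs, hy⟩, fun h z hz U hU => ?_⟩
  exact hz U ⟨hU.1, h U hU.1 hU.2⟩

lemma adjacent_iff {x y : X} : Adjacent t x y ↔ x ≠ y ∧ (x ⤳ y ∨ y ⤳ x) := by
  simp only [Adjacent, specLE_iff_specializes]

lemma Adjacent.symm {x y : X} (h : Adjacent t x y) : Adjacent t y x :=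
  ⟨h.1.symm, h.2.symm⟩

lemma Topology.IsEmbedding.adjacent_iff {Y : Type*} [TopologicalSpace Y] {f : X → Y}
    (hf : IsEmbedding f) {a b : X} : Adjacent ‹_› (f a) (f b) ↔ Adjacent t a b := by
  simp only [_root_.adjacent_iff, hf.isInducing.specializes_iff, hf.injective.ne_iff]

lemma Specializes.isPreconnected_pair {a b : X} (h : a ⤳ b) : IsPreconnected ({a, b} : Set X) :=
  (isPreconnected_singleton (x := a)).subset_closure (singleton_subset_iff.2 (mem_insert a _))
    (insert_subset (subset_closure (mem_singleton a)) (singleton_subset_iff.2 h.mem_closure))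

theorem connectedComponentIn_eq_setOf_reachIn [AlexandrovDiscrete X] {S : Set X} {x : X}
    (hx : x ∈ S) : connectedComponentIn S x = {y | ReachIn (Adjacent t) S x y} := by
  set R := {y | ReachIn (Adjacent t) S x y}
  refine Subset.antisymm ?_ fun y hy => ?_
  · -- the down-closures of `R` and of `S \ R` are open and split `S`
    set U := {z | ∃ y ∈ R, z ⤳ y}
    set V := {z | ∃ y ∈ S \ R, z ⤳ y}
    have hU : IsOpen U := isOpen_iff_forall_specializes.2
      fun a b hab ⟨y, hy, hby⟩ => ⟨y, hy, hab.trans hby⟩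
    have hV : IsOpen V := isOpen_iff_forall_specializes.2
      fun a b hab ⟨y, hy, hby⟩ => ⟨y, hy, hab.trans hby⟩
    have hstep : ∀ {y z}, y ∈ R → z ∈ S → (y ⤳ z ∨ z ⤳ y) → z ∈ R := fun {y z} hy hz hyz => by
      by_cases h : y = z
      · exact h ▸ hy
      · exact hy.tail ⟨hy.mem hx, hz, adjacent_iff.2 ⟨h, hyz⟩⟩
    have hsub := connectedComponentIn_subset S x
    have hcover : connectedComponentIn S x ⊆ U ∪ V := fun z hz => by
      by_cases h : z ∈ R
      · exact .inl ⟨z, h, specializes_rfl⟩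
      · exact .inr ⟨z, ⟨hsub hz, h⟩, specializes_rfl⟩
    have hdisj : connectedComponentIn S x ∩ (U ∩ V) = ∅ := by
      refine eq_empty_of_forall_notMem fun z ⟨hz, ⟨y, hy, hzy⟩, ⟨y', hy', hzy'⟩⟩ => hy'.2 ?_
      exact hstep (hstep hy (hsub hz) (.inr hzy)) hy'.1 (.inl hzy')
    rcases isPreconnected_iff_subset_of_disjoint.1 isPreconnected_connectedComponentIn
      U V hU hV hcover hdisj with hcU | hcV
    · intro z hz
      obtain ⟨y, hy, hzy⟩ := hcU hz
      exact hstep hy (hsub hz) (.inr hzy)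
    · obtain ⟨y, hy, hxy⟩ := hcV (mem_connectedComponentIn hx)
      exact absurd (hstep .refl hy.1 (.inl hxy)) hy.2
  · induction hy with
    | refl => exact mem_connectedComponentIn hx
    | @tail b c _ hbc ih =>
      have hpair : IsPreconnected ({b, c} : Set X) := by
        rcases (adjacent_iff.1 hbc.2.2).2 with h | h
        · exact h.isPreconnected_pair
        · exact pair_comm c b ▸ h.isPreconnected_pair
      rw [connectedComponentIn_eq ih]
      exact hpair.subset_connectedComponentIn (mem_insert b _)
        (insert_subset hbc.1 (singleton_subset_iff.2 hbc.2.1)) (mem_insert_of_mem _ rfl)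

end Adjacency

section Khalimsky

lemma khal_isOpen_iff {U : Set ℤ} :
    khal.IsOpen U ↔ ∀ n ∈ U, Even n → n - 1 ∈ U ∧ n + 1 ∈ U := by
  constructor
  · intro hU
    induction hU with
    | basic s hs =>
      obtain ⟨m, ⟨hm, rfl⟩ | ⟨hm, rfl⟩⟩ := hs
      · rintro n rfl hn
        exact absurd hm (Int.not_odd_iff_even.2 hn)
      · intro n hn hne
        obtain ⟨a, rfl⟩ := hm
        obtain ⟨b, rfl⟩ := hne
        have : b + b = a + a := by
          simp only [mem_insert_iff, mem_singleton_iff] at hn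
          omega
        simp [this]
    | univ => simp
    | inter s u _ _ hs hu => exact fun n hn he => ⟨⟨(hs n hn.1 he).1, (hu n hn.2 he).1⟩,
        ⟨(hs n hn.1 he).2, (hu n hn.2 he).2⟩⟩
    | sUnion _ _ hS =>
      rintro n ⟨s, hsS, hns⟩ he
      exact ⟨⟨s, hsS, (hS s hsS n hns he).1⟩, ⟨s, hsS, (hS s hsS n hns he).2⟩⟩
  · intro hU
    refine @isOpen_iff_forall_mem_open ℤ khal U |>.2 fun n hn => ?_
    rcases Int.even_or_odd n with he | ho
    · refine ⟨{n - 1, n, n + 1}, ?_, .basic _ ⟨n, .inr ⟨he, rfl⟩⟩, by simp⟩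
      simp [insert_subset_iff, hn, hU n hn he]
    · exact ⟨{n}, singleton_subset_iff.2 hn, .basic _ ⟨n, .inl ⟨ho, rfl⟩⟩, rfl⟩

lemma khal_alexandrovDiscrete : @AlexandrovDiscrete ℤ khal :=
  @AlexandrovDiscrete.mk ℤ khal fun _ hS => khal_isOpen_iff.2 fun n hn he =>
    ⟨fun s hs => (khal_isOpen_iff.1 (hS s hs) n (hn s hs) he).1,
      fun s hs => (khal_isOpen_iff.1 (hS s hs) n (hn s hs) he).2⟩

lemma khalPlane_alexandrovDiscrete : @AlexandrovDiscrete (ℤ × ℤ) khalPlane :=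
  @Prod.instAlexandrovDiscrete ℤ ℤ khal khal khal_alexandrovDiscrete khal_alexandrovDiscrete

end Khalimsky

section Path

variable {V W : Type*} {r : V → V → Prop}

def IsPathList (r : V → V → Prop) (l : List V) : Prop :=
  l.Nodup ∧ ∀ i j (hi : i < l.length) (hj : j < l.length), r l[i] l[j] ↔ (i + 1 = j ∨ j + 1 = i)

/-- The separation axiom of a COTS, for walks: of three distinct points, one separates the
other two. -/
def CotsSeparation (r : V → V → Prop) : Prop :=
  ∀ a b c, a ≠ b → a ≠ c → b ≠ c →
    ReachIn r {a}ᶜ b c → ReachIn r {b}ᶜ a c → ReachIn r {c}ᶜ a b → False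

namespace IsPathList

lemma map {s : W → W → Prop} {f : V → W} (hf : Injective f) (hfs : ∀ a b, s (f a) (f b) ↔ r a b)
    {l : List V} (hl : IsPathList r l) : IsPathList s (l.map f) :=
  ⟨hl.1.map hf, fun i j hi hj => by
    simpa only [List.getElem_map, hfs] using hl.2 i j (by simpa using hi) (by simpa using hj)⟩

variable {l : List V} (hl : IsPathList r l)
include hl

lemma exists_adj (hlen : 2 ≤ l.length) {x : V} (hx : x ∈ l) : ∃ y ∈ l, r x y := by
  obtain ⟨i, hi, rfl⟩ := List.getElem_of_mem hx
  by_cases h : i + 1 < l.length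
  · exact ⟨l[i + 1], List.getElem_mem h, (hl.2 _ _ _ _).2 (.inl rfl)⟩
  · exact ⟨l[i - 1], List.getElem_mem (by omega), (hl.2 _ _ _ _).2 (.inr (by omega))⟩

lemma not_three_adj {x a b c : V} (hx : x ∈ l) (ha : a ∈ l) (hb : b ∈ l) (hc : c ∈ l)
    (hxa : r x a) (hxb : r x b) (hxc : r x c) (hab : a ≠ b) (hac : a ≠ c) (hbc : b ≠ c) :
    False := by
  obtain ⟨i, hi, rfl⟩ := List.getElem_of_mem hx
  obtain ⟨ia, hia, rfl⟩ := List.getElem_of_mem ha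
  obtain ⟨ib, hib, rfl⟩ := List.getElem_of_mem hb
  obtain ⟨ic, hic, rfl⟩ := List.getElem_of_mem hc
  have : ia ≠ ib := by rintro rfl; exact hab rfl
  have : ia ≠ ic := by rintro rfl; exact hac rfl
  have : ib ≠ ic := by rintro rfl; exact hbc rfl
  rw [hl.2] at hxa hxb hxc
  omega

lemma not_triangle {a b c : V} (ha : a ∈ l) (hb : b ∈ l) (hc : c ∈ l)
    (hab : r a b) (hbc : r b c) (hac : r a c) : False := by
  obtain ⟨ia, hia, rfl⟩ := List.getElem_of_mem ha
  obtain ⟨ib, hib, rfl⟩ := List.getElem_of_mem hb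
  obtain ⟨ic, hic, rfl⟩ := List.getElem_of_mem hc
  rw [hl.2] at hab hbc hac
  omega

end IsPathList

lemma List.IsChain.reachIn_getElem {l : List V} (hch : l.IsChain r) {S : Set V} {i j : ℕ}
    (hij : i ≤ j) (hj : j < l.length)
    (hS : ∀ k (hk : k < l.length), i ≤ k → k ≤ j → l[k] ∈ S) :
    ReachIn r S l[i] l[j] := by
  induction j, hij using Nat.le_induction with
  | base => exact .refl
  | succ j hij ih =>
    exact (ih (by omega) fun k hk h1 h2 => hS k hk h1 (by omega)).tail
      ⟨hS j _ hij (by omega), hS _ hj (by omega) le_rfl, List.isChain_iff_getElem.1 hch j hj⟩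

namespace CotsSeparation

variable (hsep : CotsSeparation r) (hsymm : ∀ a b, r a b → r b a)
include hsep hsymm

lemma not_three_adj {w a b c : V} (hirr : ∀ a, ¬ r a a) (ha : r w a) (hb : r w b)
    (hc : r w c) (hab : a ≠ b) (hac : a ≠ c) (hbc : b ≠ c) : False := by
  -- any two of `a, b, c` are joined through `w`, which avoids the third
  have via : ∀ {y u v}, r w u → r w v → y ≠ w → u ≠ y → v ≠ y → ReachIn r {y}ᶜ u v :=
    fun hu hv hyw huy hvy => .head ⟨huy, hyw.symm, hsymm _ _ hu⟩ (.single ⟨hyw.symm, hvy, hv⟩)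
  have hne : ∀ {y}, r w y → y ≠ w := fun h hyw => hirr w (hyw ▸ h)
  exact hsep a b c hab hac hbc (via hb hc (hne ha) hab.symm hac.symm)
    (via ha hc (hne hb) hab hbc.symm) (via ha hb (hne hc) hac hbc)

lemma isPathList {l : List V} (hirr : ∀ a, ¬ r a a) (hnd : l.Nodup) (hch : l.IsChain r) :
    IsPathList r l := by
  have hne : ∀ {i j} (hi : i < l.length) (hj : j < l.length), i ≠ j → l[i] ≠ l[j] :=
    fun hi hj hij h => hij ((hnd.getElem_inj_iff).1 h)
  -- a chord `l[i] ~ l[j]` closes a cycle through `l[i], l[i+1], l[j]`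
  have chord : ∀ {i j} (hi : i < l.length) (hj : j < l.length), i + 1 < j → ¬ r l[i] l[j] := by
    intro i j hi hj hij h
    refine hsep l[i] l[i + 1] l[j] (hne _ _ (by omega)) (hne _ _ (by omega))
      (hne _ _ (by omega)) ?_ (.single ⟨hne _ _ (by omega), hne _ _ (by omega), h⟩)
      (.single ⟨hne _ _ (by omega), hne _ _ (by omega), List.isChain_iff_getElem.1 hch i _⟩)
    exact hch.reachIn_getElem (by omega) hj fun k hk h1 _ => hne hk hi (by omega)
  refine ⟨hnd, fun i j hi hj => ⟨fun h => ?_, ?_⟩⟩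
  · by_contra hij
    rcases lt_trichotomy i j with hlt | rfl | hgt
    · exact chord hi hj (by omega) h
    · exact hirr _ h
    · exact chord hj hi (by omega) (hsymm _ _ h)
  · rintro (rfl | rfl)
    · exact List.isChain_iff_getElem.1 hch i hj
    · exact hsymm _ _ (List.isChain_iff_getElem.1 hch j hi)

theorem exists_isPathList [Finite V] (hirr : ∀ a, ¬ r a a)
    (hconn : ∀ a b, ReachIn r univ a b) : ∃ l : List V, (∀ v, v ∈ l) ∧ IsPathList r l := by
  have := Fintype.ofFinite V
  obtain ⟨l, ⟨hnd, hch⟩, hmax⟩ := Set.exists_max_image {l : List V | l.Nodup ∧ l.IsChain r}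
    List.length ((List.finite_length_le V (Fintype.card V)).subset fun l h => h.1.length_le_card)
    ⟨[], List.nodup_nil, List.isChain_nil⟩
  have hpath := hsep.isPathList hsymm hirr hnd hch
  refine ⟨l, fun v => ?_, hpath⟩
  by_contra hv
  -- an edge from `l` towards `v` either extends `l` at an end or gives an inner point of `l`
  -- three neighbours
  have hlonger : ∀ l' : List V, l'.Nodup → l'.IsChain r → l.length < l'.length → False :=
    fun l' h1 h2 h => (hmax l' ⟨h1, h2⟩).not_gt h
  by_cases hnil : l = []
  · subst hnil
    exact hlonger [v] (List.nodup_singleton v) (List.isChain_singleton v) (by simp)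
  obtain ⟨x, hx, z, hz, hxz⟩ :=
    (hconn (l.head hnil) v).exists_step_out (T := {y | y ∈ l}) (List.head_mem hnil) hv
  obtain ⟨i, hi, rfl⟩ := List.getElem_of_mem hx
  have hne : ∀ {j} (hj : j < l.length), l[j] ≠ z := fun hj h => hz (h ▸ List.getElem_mem hj)
  by_cases h0 : i = 0
  · subst h0
    refine hlonger (z :: l) (List.nodup_cons.2 ⟨hz, hnd⟩) ?_ (by simp)
    exact hch.cons_of_ne_nil hnil (by simpa [List.head_eq_getElem] using hsymm _ _ hxz)
  by_cases hlast : i + 1 = l.length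
  · refine hlonger (l ++ [z]) (List.nodup_append.2 ⟨hnd, List.nodup_singleton z, ?_⟩)
      (hch.append (List.isChain_singleton z) ?_) (by simp)
    · exact fun a ha b hb hab => hz (List.mem_singleton.1 hb ▸ hab ▸ ha)
    · simpa [List.getLast?_eq_getElem?, ← hlast] using hxz
  exact hsep.not_three_adj hsymm hirr (a := l[i - 1]) (b := l[i + 1])
    ((hpath.2 _ _ _ _).2 (.inr (by omega))) ((hpath.2 _ _ _ _).2 (.inl rfl)) hxz
    (fun h => by have := hnd.getElem_inj_iff.1 h; omega) (hne _) (hne _)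

end CotsSeparation

end Path

section Cots

variable {X : Type*} [t : TopologicalSpace X] [AlexandrovDiscrete X]

lemma reachIn_univ_of_connectedSpace [ConnectedSpace X] (a b : X) :
    ReachIn (Adjacent t) univ a b := by
  have hb : b ∈ connectedComponentIn univ a := by
    rw [connectedComponentIn_univ, PreconnectedSpace.connectedComponent_eq_univ]
    trivial
  rwa [connectedComponentIn_eq_setOf_reachIn (mem_univ a)] at hb

lemma IsCOTS.cotsSeparation (h : IsCOTS t) : CotsSeparation (Adjacent t) := by
  intro a b c hab hac hbc hbc' hac' hab'
  obtain ⟨y, hy, u, hu, v, hv, huv⟩ :=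
    h.2 {a, b, c} (ncard_eq_three.2 ⟨a, b, c, hab, hac, hbc, rfl⟩)
  apply huv
  rw [connectedComponentIn_eq_setOf_reachIn hu.2, connectedComponentIn_eq_setOf_reachIn hv.2]
  refine ReachIn.setOf_eq (fun _ _ => Adjacent.symm) ?_
  have pair : ∀ {p q}, ReachIn (Adjacent t) {y}ᶜ p q → u ∈ ({p, q} : Set X) →
      v ∈ ({p, q} : Set X) → ReachIn (Adjacent t) {y}ᶜ u v := by
    rintro p q hpq (rfl | rfl) (rfl | rfl)
    exacts [.refl, hpq, hpq.symm fun _ _ => Adjacent.symm, .refl]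
  rcases hy with rfl | rfl | rfl
  · exact pair hbc' (by aesop) (by aesop)
  · exact pair hac' (by aesop) (by aesop)
  · exact pair hab' (by aesop) (by aesop)

end Cots

theorem IsCOTSArc.exists_isPathList {X : Type*} [t : TopologicalSpace X] {A : Set X}
    (hA : IsCOTSArc t A) : ∃ l : List X, (∀ x, x ∈ l ↔ x ∈ A) ∧ IsPathList (Adjacent t) l := by
  obtain ⟨C, tC, hfin, hC, f, hf, rfl⟩ := hA
  have := hC.1
  obtain ⟨l, hl, hpath⟩ := hC.cotsSeparation.exists_isPathList (fun _ _ => Adjacent.symm)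
    (fun _ h => h.1 rfl) reachIn_univ_of_connectedSpace
  exact ⟨l.map f, by simp [hl], hpath.map hf.injective fun _ _ => hf.adjacent_iff⟩

section Cyclic

variable {n : ℕ}

def cycAdj (i k : ZMod n) : Prop := k = i + 1 ∨ i = k + 1

def leftEnds (P : Set (ZMod n)) : Set (ZMod n) := {i | i ∈ P ∧ i - 1 ∉ P}

variable {P : Set (ZMod n)}

lemma reachIn_sub_natCast {x : ZMod n} {k : ℕ} (hP : ∀ s ≤ k, x - s ∈ P) :
    ReachIn cycAdj P x (x - k) := by
  induction k with
  | zero =>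
    simp only [Nat.cast_zero, sub_zero]
    exact .refl
  | succ k ih =>
    exact (ih fun s hs => hP s (by omega)).tail
      ⟨hP k (by omega), hP _ le_rfl, .inr (by push_cast; ring)⟩

lemma eq_of_reachIn_of_mem_leftEnds {i i' : ZMod n} (hi : i ∈ leftEnds P)
    (hi' : i' ∈ leftEnds P) (h : ReachIn cycAdj P i i') : i = i' := by
  -- whatever is reachable from a left end `i` lies on the run `i, i + 1, …` inside `P`
  have run : ∀ {k}, ReachIn cycAdj P i k → ∃ t : ℕ, k = i + t ∧ ∀ s ≤ t, i + s ∈ P := by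
    intro k hk
    induction hk with
    | refl => exact ⟨0, by simp, fun s hs => by simpa [Nat.le_zero.1 hs] using hi.1⟩
    | @tail k k' _ hstep ih =>
      obtain ⟨t, rfl, ht⟩ := ih
      rcases hstep.2.2 with h | h
      · refine ⟨t + 1, by rw [h]; push_cast; ring, fun s hs => ?_⟩
        rcases Nat.lt_or_eq_of_le hs with hs | rfl
        · exact ht s (by omega)
        · convert hstep.2.1 using 1
          rw [h]; push_cast; ring
      · cases t with
        | zero =>
          refine absurd ?_ hi.2
          convert hstep.2.1 using 1
          push_cast at h
          linear_combination h
        | succ t => exact ⟨t, by push_cast at h; linear_combination h.symm,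
            fun s hs => ht s (by omega)⟩
  obtain ⟨t, rfl, ht⟩ := run h
  cases t with
  | zero => simp
  | succ t => exact absurd (by convert ht t (by omega) using 1; push_cast; ring) hi'.2

variable [NeZero n]

lemma exists_mem_leftEnds_reachIn (hP : P ≠ univ) {x : ZMod n} (hx : x ∈ P) :
    ∃ i ∈ leftEnds P, ReachIn cycAdj P x i := by
  classical
  obtain ⟨g, hg⟩ := (ne_univ_iff_exists_notMem P).1 hP
  have hex : ∃ k : ℕ, x - k ∉ P := ⟨(x - g).val, by simpa [ZMod.natCast_zmod_val] using hg⟩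
  have hk : 1 ≤ Nat.find hex := Nat.one_le_iff_ne_zero.2 fun h =>
    (by simpa [h] using Nat.find_spec hex : x ∉ P) hx
  have hmem : ∀ s < Nat.find hex, x - s ∈ P := fun s hs => not_not.1 (Nat.find_min hex hs)
  refine ⟨x - (Nat.find hex - 1 : ℕ), ⟨hmem _ (by omega), ?_⟩,
    reachIn_sub_natCast fun s hs => hmem s (by omega)⟩
  rw [Nat.cast_sub hk, sub_sub, Nat.cast_one, sub_add_cancel]
  exact Nat.find_spec hex

lemma ncard_reachClasses_cycAdj (hP : P ≠ univ) :
    (reachClasses cycAdj P).ncard = (leftEnds P).ncard := by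
  have hclasses : reachClasses cycAdj P = (fun i => {k | ReachIn cycAdj P i k}) '' leftEnds P := by
    refine Subset.antisymm ?_ (image_mono fun i hi => hi.1)
    rintro _ ⟨x, hx, rfl⟩
    obtain ⟨i, hi, hxi⟩ := exists_mem_leftEnds_reachIn hP hx
    exact ⟨i, hi, (hxi.setOf_eq fun _ _ => Or.symm).symm⟩
  rw [hclasses, InjOn.ncard_image]
  intro i hi i' hi' h
  have hi'i' : i' ∈ (fun i => {k | ReachIn cycAdj P i k}) i' := ReflTransGen.refl
  rw [← h] at hi'i'
  exact eq_of_reachIn_of_mem_leftEnds hi hi' hi'i'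

lemma ncard_leftEnds_compl : (leftEnds Pᶜ).ncard = (leftEnds P).ncard := by
  -- with `Q = {i | i - 1 ∈ P}`, both sides are `#Q - #(P ∩ Q)` and `#P - #(P ∩ Q)`
  set Q := (· - 1) ⁻¹' P
  have hQ : Q.ncard = P.ncard := ncard_preimage_of_injective_subset_range sub_left_injective
    fun x _ => ⟨x + 1, add_sub_cancel_right x 1⟩
  have hPc : leftEnds Pᶜ = Q \ P := by
    ext i
    simp only [leftEnds, Q, mem_compl_iff, not_not, mem_sdiff, mem_preimage]
    exact and_comm
  have h1 := ncard_inter_add_ncard_sdiff_eq_ncard P Q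
  have h2 := ncard_inter_add_ncard_sdiff_eq_ncard Q P
  rw [inter_comm] at h2
  rw [hPc]
  change _ = (P \ Q).ncard
  omega

end Cyclic

lemma ZMod.eq_add_one_iff_val {m : ℕ} {i k : ZMod (m + 1)} :
    k = i + 1 ↔ k.val = i.val + 1 ∨ (i.val = m ∧ k.val = 0) := by
  rw [← (ZMod.val_injective (m + 1)).eq_iff]
  have hi := ZMod.val_lt i
  have hk := ZMod.val_lt k
  rcases m.eq_zero_or_pos with rfl | hm
  · have := ZMod.val_lt (i + 1)
    omega
  · have : Fact (1 < m + 1) := ⟨by omega⟩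
    rw [ZMod.val_add, ZMod.val_one]
    by_cases h : i.val + 1 = m + 1
    · rw [h, Nat.mod_self]
      omega
    · rw [Nat.mod_eq_of_lt (by omega)]
      omega

section ClosedPath

variable {V : Type*} {r : V → V → Prop} {l : List V} {j : V}

def closedPath (l : List V) (j : V) (i : ZMod (l.length + 1)) : V :=
  if h : i.val < l.length then l[i.val] else j

lemma closedPath_injective (hnd : l.Nodup) (hj : j ∉ l) : Injective (closedPath l j) := by
  intro i k h
  have hi := ZMod.val_lt i
  have hk := ZMod.val_lt k
  apply ZMod.val_injective
  unfold closedPath at h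
  split_ifs at h with h1 h2 h2
  · exact hnd.getElem_inj_iff.1 h
  · exact absurd (h ▸ List.getElem_mem h1) hj
  · exact absurd (h ▸ List.getElem_mem h2) hj
  · omega

lemma range_closedPath : range (closedPath l j) = insert j {x | x ∈ l} := by
  ext x
  constructor
  · rintro ⟨i, rfl⟩
    unfold closedPath
    split_ifs with h
    · exact .inr (List.getElem_mem h)
    · exact .inl rfl
  · have hval : ∀ {k}, k < l.length + 1 → ((k : ZMod (l.length + 1))).val = k :=
      fun hk => by rw [ZMod.val_natCast, Nat.mod_eq_of_lt hk]
    rintro (rfl | hx)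
    · exact ⟨l.length, by simp [closedPath, hval]⟩
    · obtain ⟨k, hk, rfl⟩ := List.getElem_of_mem hx
      exact ⟨k, by simp [closedPath, hval (Nat.lt_succ_of_lt hk), hk]⟩

lemma IsPathList.adj_closedPath_iff (hl : IsPathList r l) (hsymm : ∀ a b, r a b → r b a)
    (hlen : 0 < l.length) (hirr : ¬ r j j)
    (hj : ∀ k (hk : k < l.length), r j l[k] ↔ k = 0 ∨ k + 1 = l.length)
    (i k : ZMod (l.length + 1)) :
    r (closedPath l j i) (closedPath l j k) ↔ cycAdj i k := by
  have hi := ZMod.val_lt i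
  have hk := ZMod.val_lt k
  rw [cycAdj, ZMod.eq_add_one_iff_val, ZMod.eq_add_one_iff_val]
  unfold closedPath
  split_ifs with h1 h2 h2
  · rw [hl.2]
    omega
  · rw [show r _ j ↔ r j _ from ⟨hsymm _ _, hsymm _ _⟩, hj]
    omega
  · rw [hj]
    omega
  · simp only [hirr, false_iff]
    omega

end ClosedPath

namespace IsJordanCurve

variable {X : Type*} [t : TopologicalSpace X] {J : Set X} (hJ : IsJordanCurve t J)
include hJ

lemma exists_isPathList {j : X} (hj : j ∈ J) :
    ∃ l : List X, (∀ x, x ∈ l ↔ x ∈ J \ {j}) ∧ IsPathList (Adjacent t) l ∧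
      l.length + 1 = J.ncard := by
  classical
  obtain ⟨l, hl, hpath⟩ := (hJ.2.2 j hj).exists_isPathList
  refine ⟨l, hl, hpath, ?_⟩
  have hset : J \ {j} = (l.toFinset : Set X) := by ext; simp [hl]
  rw [← ncard_sdiff_singleton_add_one hj hJ.1, hset, ncard_coe_finset,
    List.toFinset_card_of_nodup hpath.1]

lemma not_three_adj {x a b c : X} (hx : x ∈ J) (ha : a ∈ J) (hb : b ∈ J) (hc : c ∈ J)
    (hxa : Adjacent t x a) (hxb : Adjacent t x b) (hxc : Adjacent t x c)
    (hab : a ≠ b) (hac : a ≠ c) (hbc : b ≠ c) : False := by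
  by_cases h : ∃ j ∈ J, j ≠ x ∧ j ≠ a ∧ j ≠ b ∧ j ≠ c
  · obtain ⟨j, hj, hjx, hja, hjb, hjc⟩ := h
    obtain ⟨l, hl, hpath, -⟩ := hJ.exists_isPathList hj
    exact hpath.not_three_adj ((hl x).2 ⟨hx, hjx.symm⟩) ((hl a).2 ⟨ha, hja.symm⟩)
      ((hl b).2 ⟨hb, hjb.symm⟩) ((hl c).2 ⟨hc, hjc.symm⟩) hxa hxb hxc hab hac hbc
  -- Otherwise `J = {x, a, b, c}` and `x` is adjacent to all of `J \ {x}`. The middle point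
  -- `l[1]` of the path `l` through `J \ {x}` then forms a triangle with `x` and `l[2]`.
  push Not at h
  have hadj : ∀ y ∈ J, y ≠ x → Adjacent t x y := fun y hy hyx => by
    by_cases hya : y = a
    · exact hya ▸ hxa
    by_cases hyb : y = b
    · exact hyb ▸ hxb
    · exact h y hy hyx hya hyb ▸ hxc
  obtain ⟨l, hl, hpath, hlen⟩ := hJ.exists_isPathList hx
  have h1 : 1 < l.length := by have := hJ.2.1; omega
  have h2 : 2 < l.length := by have := hJ.2.1; omega
  have hmem : ∀ k (hk : k < l.length), l[k] ∈ J ∧ l[k] ≠ x :=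
    fun k hk => (hl _).1 (List.getElem_mem hk)
  have hne : ∀ k (hk : k < l.length), k ≠ 0 → l[k] ≠ l[0] :=
    fun k hk hk0 h => hk0 (hpath.1.getElem_inj_iff.1 h)
  obtain ⟨l', hl', hpath', -⟩ := hJ.exists_isPathList (hmem 0 (by omega)).1
  exact hpath'.not_triangle ((hl' x).2 ⟨hx, (hmem 0 _).2.symm⟩)
    ((hl' _).2 ⟨(hmem 1 h1).1, hne 1 h1 one_ne_zero⟩)
    ((hl' _).2 ⟨(hmem 2 h2).1, hne 2 h2 two_ne_zero⟩)
    (hadj _ (hmem 1 h1).1 (hmem 1 h1).2) ((hpath.2 1 2 h1 h2).2 (.inl rfl))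
    (hadj _ (hmem 2 h2).1 (hmem 2 h2).2)

lemma exists_two_adj {x : X} (hx : x ∈ J) :
    ∃ u ∈ J, ∃ v ∈ J, u ≠ v ∧ Adjacent t x u ∧ Adjacent t x v := by
  have h4 := hJ.2.1
  obtain ⟨w, hw, hwx⟩ := exists_ne_of_one_lt_ncard (show 1 < J.ncard by omega) x
  obtain ⟨l, hl, hpath, hlen⟩ := hJ.exists_isPathList hw
  obtain ⟨u, hu, hxu⟩ := hpath.exists_adj (by omega) ((hl x).2 ⟨hx, hwx.symm⟩)
  obtain ⟨l', hl', hpath', hlen'⟩ := hJ.exists_isPathList ((hl u).1 hu).1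
  obtain ⟨v, hv, hxv⟩ := hpath'.exists_adj (by omega) ((hl' x).2 ⟨hx, hxu.1⟩)
  exact ⟨u, ((hl u).1 hu).1, v, ((hl' v).1 hv).1, fun h => ((hl' v).1 hv).2 h.symm, hxu, hxv⟩

lemma adj_getElem_iff {j : X} (hj : j ∈ J) {l : List X} (hl : ∀ x, x ∈ l ↔ x ∈ J \ {j})
    (hpath : IsPathList (Adjacent t) l) {k : ℕ} (hk : k < l.length) :
    Adjacent t j l[k] ↔ k = 0 ∨ k + 1 = l.length := by
  have hmem : ∀ k (hk : k < l.length), l[k] ∈ J ∧ l[k] ≠ j :=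
    fun k hk => (hl _).1 (List.getElem_mem hk)
  -- inner points of the path already have two neighbours, so `j` can only see its ends
  have hends : ∀ k (hk : k < l.length), Adjacent t j l[k] → k = 0 ∨ k + 1 = l.length := by
    intro k hk hjk
    by_contra! h
    exact hJ.not_three_adj (hmem k hk).1 (hmem (k - 1) (by omega)).1 (hmem (k + 1) (by omega)).1
      hj ((hpath.2 _ _ _ _).2 (.inr (by omega))) ((hpath.2 _ _ _ _).2 (.inl rfl)) hjk.symm
      (fun h' => by have := hpath.1.getElem_inj_iff.1 h'; omega) (hmem _ _).2 (hmem _ _).2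
  obtain ⟨u, hu, v, hv, huv, hju, hjv⟩ := hJ.exists_two_adj hj
  obtain ⟨iu, hiu, rfl⟩ := List.getElem_of_mem ((hl u).2 ⟨hu, hju.1.symm⟩)
  obtain ⟨iv, hiv, rfl⟩ := List.getElem_of_mem ((hl v).2 ⟨hv, hjv.1.symm⟩)
  have : iu ≠ iv := by rintro rfl; exact huv rfl
  have := hends _ _ hju
  have := hends _ _ hjv
  refine ⟨hends k hk, fun _ => ?_⟩
  obtain rfl | rfl : k = iu ∨ k = iv := by omega
  exacts [hju, hjv]

theorem exists_cycle : ∃ (m : ℕ) (e : ZMod (m + 1) → X),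
    Injective e ∧ range e = J ∧ ∀ i k, Adjacent t (e i) (e k) ↔ cycAdj i k := by
  obtain ⟨j, hj⟩ : J.Nonempty := nonempty_of_ncard_ne_zero (by have := hJ.2.1; omega)
  obtain ⟨l, hl, hpath, hlen⟩ := hJ.exists_isPathList hj
  have hjl : j ∉ l := fun h => ((hl j).1 h).2 rfl
  refine ⟨l.length, closedPath l j, closedPath_injective hpath.1 hjl, ?_,
    hpath.adj_closedPath_iff (fun _ _ => Adjacent.symm) (by have := hJ.2.1; omega)
      (fun h => h.1 rfl) fun _ => hJ.adj_getElem_iff hj hl hpath⟩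
  ext x
  by_cases hxj : x = j
  · simp [range_closedPath, hxj, hj]
  · simp [range_closedPath, hxj, hl]

theorem ncard_components_eq [AlexandrovDiscrete X] {C : Set X} (hC : C ⊆ J) (hne : C.Nonempty)
    (hprop : C ≠ J) :
    (connectedComponentIn C '' C).ncard = (connectedComponentIn (J \ C) '' (J \ C)).ncard := by
  obtain ⟨m, e, he, hrange, hadj⟩ := hJ.exists_cycle
  have hcomp : ∀ P, (connectedComponentIn (e '' P) '' (e '' P)).ncard =
      (reachClasses cycAdj P).ncard := fun P => by
    rw [image_congr fun x hx => connectedComponentIn_eq_setOf_reachIn hx]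
    exact ncard_reachClasses_image he hadj P
  set P := e ⁻¹' C
  have hP : e '' P = C := image_preimage_eq_of_subset (hrange ▸ hC)
  have hPc : e '' Pᶜ = J \ C := by rw [image_compl_preimage, hrange]
  have hP_ne : P ≠ univ := fun h => hprop (hC.antisymm (by rw [← hrange, ← hP, h, image_univ]))
  have hPc_ne : Pᶜ ≠ univ := fun h => by
    obtain ⟨x, hx⟩ := hne
    obtain ⟨i, rfl⟩ := hrange ▸ hC hx
    have hi : i ∈ P := hx
    rw [compl_univ_iff.1 h] at hi
    exact hi
  calc (connectedComponentIn C '' C).ncard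
      = (leftEnds P).ncard := by rw [← ncard_reachClasses_cycAdj hP_ne, ← hcomp, hP]
    _ = (leftEnds Pᶜ).ncard := ncard_leftEnds_compl.symm
    _ = _ := by rw [← ncard_reachClasses_cycAdj hPc_ne, ← hcomp, hPc]

end IsJordanCurve

/-- A nonempty proper subset of a digital Jordan curve has the same number of
connected components as its complement in the curve. -/
theorem stmt14 (J C : Set (ℤ × ℤ)) (hJ : IsJordanCurve khalPlane J)
    (hC : C ⊆ J) (hne : C.Nonempty) (hprop : C ≠ J) :
    {S : Set (ℤ × ℤ) | ∃ x ∈ C, S = @connectedComponentIn _ khalPlane C x}.ncard =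
      {S : Set (ℤ × ℤ) | ∃ x ∈ J \ C,
        S = @connectedComponentIn _ khalPlane (J \ C) x}.ncard := by
  have hcomps : ∀ S : Set (ℤ × ℤ), {T | ∃ x ∈ S, T = @connectedComponentIn _ khalPlane S x} =
      @connectedComponentIn _ khalPlane S '' S := fun S => by
    ext T
    simp [eq_comm]
  rw [hcomps, hcomps]
  exact @IsJordanCurve.ncard_components_eq _ khalPlane J hJ khalPlane_alexandrovDiscrete C
    hC hne hprop
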